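/- Let n ≥ 2 and let E_1, …, E_n be real normed vector spaces. For each l = 1, …, n−1 let f_l : E_l → E_{l+1} be Lipschitz continuous with constant H_l ≥ 0, and let R : E_n → ℝ be Lipschitz continuous with constant H_n ≥ 0. Given points p_l ∈ E_l for l = 1, …, n, define the relaxation residuals r_l = p_{l+1} − f_l(p_l) ∈ E_{l+1} for l = 1, …, n−1. Then the approximation error satisfies |R(f_{n−1}(f_{n−2}(⋯f_1(p_1)⋯))) − R(p_n)| ≤ H_n · Σ_{l=1}^{n−1} ( ‖r_l‖ · Π_{j=l+1}^{n−1} H_j ). -/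

import Mathlib

/-! The error `e m = ‖fwd f (p 0) m - p m‖` of the relaxed points against the exact forward pass
satisfies `e 0 = 0` and `e (m + 1) ≤ H m * e m + ‖r m‖`, by the triangle inequality through
`f m (p m)` and the Lipschitz bound on `f m`. Unrolling this linear recursion bounds `e (n - 1)` by
the residuals weighted with the products of the later Lipschitz constants, and a last Lipschitz
step through `R` gives the factor `Hn`. -/

/-- Forward propagation through the composed subnetworks:
`fwd f x l = f_{l-1} (f_{l-2} (⋯ f_0 (x) ⋯))`. -/
def fwd {E : ℕ → Type*} (f : ∀ l, E l → E (l + 1)) (x : E 0) : (l : ℕ) → E l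
  | 0 => x
  | k + 1 => f k (fwd f x k)

open Finset

lemma sum_mul_prod_Ico_succ (r H : ℕ → ℝ) (N : ℕ) :
    ∑ l ∈ range (N + 1), r l * ∏ j ∈ Ico (l + 1) (N + 1), H j =
      H N * ∑ l ∈ range N, r l * ∏ j ∈ Ico (l + 1) N, H j + r N := by
  rw [sum_range_succ, Ico_self, prod_empty, mul_one, mul_sum]
  congr 1
  refine sum_congr rfl fun l hl => ?_
  rw [prod_Ico_succ_top (mem_range.mp hl), mul_comm _ (H N), mul_left_comm]

lemma le_sum_mul_prod_of_succ_le (e r H : ℕ → ℝ) (hH : ∀ l, 0 ≤ H l) (N : ℕ) (he₀ : e 0 ≤ 0)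
    (he : ∀ m < N, e (m + 1) ≤ H m * e m + r m) :
    e N ≤ ∑ l ∈ range N, r l * ∏ j ∈ Ico (l + 1) N, H j := by
  induction N with
  | zero => simpa using he₀
  | succ N ih =>
    rw [sum_mul_prod_Ico_succ]
    have ih := ih fun m hm => he m (Nat.lt_succ_of_lt hm)
    calc e (N + 1) ≤ H N * e N + r N := he N (Nat.lt_succ_self N)
      _ ≤ _ := by gcongr; exact hH N

lemma norm_fwd_succ_sub_le {E : ℕ → Type*} [∀ i, SeminormedAddCommGroup (E i)]
    (f : ∀ l, E l → E (l + 1)) (x : E 0) (p : ∀ l, E l) (m : ℕ) (Hm : ℝ)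
    (hf : ∀ x y : E m, ‖f m x - f m y‖ ≤ Hm * ‖x - y‖) :
    ‖fwd f x (m + 1) - p (m + 1)‖ ≤ Hm * ‖fwd f x m - p m‖ + ‖p (m + 1) - f m (p m)‖ := by
  calc ‖fwd f x (m + 1) - p (m + 1)‖
      = ‖(f m (fwd f x m) - f m (p m)) - (p (m + 1) - f m (p m))‖ := by
        rw [fwd, sub_sub_sub_cancel_right]
    _ ≤ ‖f m (fwd f x m) - f m (p m)‖ + ‖p (m + 1) - f m (p m)‖ := norm_sub_le _ _
    _ ≤ Hm * ‖fwd f x m - p m‖ + ‖p (m + 1) - f m (p m)‖ := by gcongr; exact hf _ _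

lemma norm_fwd_sub_le {E : ℕ → Type*} [∀ i, SeminormedAddCommGroup (E i)]
    (f : ∀ l, E l → E (l + 1)) (p : ∀ l, E l) (H : ℕ → ℝ) (hH : ∀ l, 0 ≤ H l) (N : ℕ)
    (hf : ∀ l, l < N → ∀ x y : E l, ‖f l x - f l y‖ ≤ H l * ‖x - y‖) :
    ‖fwd f (p 0) N - p N‖ ≤
      ∑ l ∈ range N, ‖p (l + 1) - f l (p l)‖ * ∏ j ∈ Ico (l + 1) N, H j :=
  le_sum_mul_prod_of_succ_le (fun m => ‖fwd f (p 0) m - p m‖) _ H hH N (by simp [fwd])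
    fun m hm => norm_fwd_succ_sub_le f (p 0) p m (H m) (hf m hm)

theorem approximation_error_general (n : ℕ)
    (E : ℕ → Type*) [∀ i, NormedAddCommGroup (E i)]
    (f : ∀ l, E l → E (l + 1)) (R : E (n - 1) → ℝ)
    (H : ℕ → ℝ) (hH : ∀ l, 0 ≤ H l)
    (hf : ∀ l, l < n - 1 → ∀ x y : E l, ‖f l x - f l y‖ ≤ H l * ‖x - y‖)
    (Hn : ℝ) (hHn : 0 ≤ Hn)
    (hR : ∀ x y : E (n - 1), |R x - R y| ≤ Hn * ‖x - y‖)
    (p : ∀ l, E l) :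
    |R (fwd f (p 0) (n - 1)) - R (p (n - 1))| ≤
      Hn * ∑ l ∈ Finset.range (n - 1),
        ‖p (l + 1) - f l (p l)‖ * ∏ j ∈ Finset.Ico (l + 1) (n - 1), H j :=
  (hR _ _).trans (mul_le_mul_of_nonneg_left (norm_fwd_sub_le f p H hH (n - 1) hf) hHn)

/-- **Theorem 1 (Approximation Error).**  A network is split into `n ≥ 2` subnetworks
`f l : E l → E (l+1)` (for `l = 0, …, n-2`), each Lipschitz with constant `H l ≥ 0`,
and the loss `R : E (n-1) → ℝ` is Lipschitz with constant `Hn ≥ 0`.  Given points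
`p l ∈ E l`, with residuals `r l = p (l+1) - f l (p l)`, the approximation error
`|R (f_{n-2}(⋯ f_0 (p 0) ⋯)) - R (p (n-1))|` is bounded by
`Hn * ∑_{l=0}^{n-2} ‖r l‖ * ∏_{j=l+1}^{n-2} H j` (the empty product being `1`). -/
theorem approximation_error (n : ℕ) (hn : 2 ≤ n)
    (E : ℕ → Type*) [∀ i, NormedAddCommGroup (E i)] [∀ i, NormedSpace ℝ (E i)]
    (f : ∀ l, E l → E (l + 1)) (R : E (n - 1) → ℝ)
    (H : ℕ → ℝ) (hH : ∀ l, 0 ≤ H l)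
    (hf : ∀ l, l < n - 1 → ∀ x y : E l, ‖f l x - f l y‖ ≤ H l * ‖x - y‖)
    (Hn : ℝ) (hHn : 0 ≤ Hn)
    (hR : ∀ x y : E (n - 1), |R x - R y| ≤ Hn * ‖x - y‖)
    (p : ∀ l, E l) :
    |R (fwd f (p 0) (n - 1)) - R (p (n - 1))| ≤
      Hn * ∑ l ∈ Finset.range (n - 1),
        ‖p (l + 1) - f l (p l)‖ * ∏ j ∈ Finset.Ico (l + 1) (n - 1), H j :=
  approximation_error_general n E f R H hH hf Hn hHn hR p
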